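/- Fix ε > 0 and let V₁ = N₁, i.e. V₁(x) = Z⁻¹exp(−⟨x⟩) with Z = ∫exp(−⟨x⟩)dx. Then V_ε*ρ(x) > 0 for every x and every Borel probability measure ρ, and there is a constant C = C(V₁) > 0 such that for every ρ ∈ P₂(ℝ^d): sup_x |(∇V_ε * log(V_ε*ρ))(x)| ≤ C/ε and sup_x |∇(∇V_ε * log(V_ε*ρ))(x)| ≤ C/ε². -/

import Mathlib

open MeasureTheory Filter
open scoped ENNReal Topology RealInnerProductSpace

noncomputable section

/-- Euclidean space `ℝ^d`. -/
abbrev Rd (d : ℕ) : Type := EuclideanSpace ℝ (Fin d)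

/-- Japanese bracket `⟨x⟩ = √(1+‖x‖²)`. -/
def jbr {d : ℕ} (x : Rd d) : ℝ := Real.sqrt (1 + ‖x‖ ^ 2)

/-- The normalised kernels `N_p(x) = Z_p⁻¹ exp(-⟨x⟩^p)`, `Z_p = ∫ exp(-⟨x⟩^p)`. -/
def Nker (d p : ℕ) : Rd d → ℝ := fun x =>
  (∫ y : Rd d, Real.exp (-(jbr y ^ p)))⁻¹ * Real.exp (-(jbr x ^ p))

/-- Assumption (V1): `V ∈ C_b ∩ C¹`, `V ≥ 0`, `∫ V = 1`, `V` even. -/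
structure IsV1 {d : ℕ} (V : Rd d → ℝ) : Prop where
  contDiff : ContDiff ℝ 1 V
  bdd : ∃ M, ∀ x, V x ≤ M
  nonneg : ∀ x, 0 ≤ V x
  integrable : Integrable V
  int_one : (∫ x : Rd d, V x) = 1
  symm : ∀ x, V (-x) = V x

/-- Rescaled mollifier `V_ε(x) = ε^{-d} V(x/ε)`. -/
def moll {d : ℕ} (ε : ℝ) (V : Rd d → ℝ) (x : Rd d) : ℝ := (ε ^ d)⁻¹ * V (ε⁻¹ • x)

/-- Convolution with a measure: `(V_ε * μ)(x) = ∫ V_ε(x - y) dμ(y)`. -/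
def convM {d : ℕ} (ε : ℝ) (V : Rd d → ℝ) (μ : Measure (Rd d)) (x : Rd d) : ℝ :=
  ∫ y, moll ε V (x - y) ∂μ

/-- `(∇V_ε * g)(x) = ∫ ∇V_ε(x - y) g(y) dy`. -/
def convGradF {d : ℕ} (ε : ℝ) (V : Rd d → ℝ) (g : Rd d → ℝ) (x : Rd d) : Rd d :=
  ∫ y, g y • gradient (moll ε V) (x - y)

/-- Finite second moment. -/
def FinSecondMoment {d : ℕ} (μ : Measure (Rd d)) : Prop :=
  Integrable (fun x => ‖x‖ ^ 2) μ

/-- `γ` is a transport plan between `μ` and `ν`. -/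
def IsCoupling {d : ℕ} (γ : Measure (Rd d × Rd d)) (μ ν : Measure (Rd d)) : Prop :=
  IsProbabilityMeasure γ ∧ γ.map Prod.fst = μ ∧ γ.map Prod.snd = ν

/-- Squared 2-Wasserstein distance. -/
def dW2sq {d : ℕ} (μ ν : Measure (Rd d)) : ℝ :=
  sInf ((fun γ : Measure (Rd d × Rd d) => ∫ q, ‖q.1 - q.2‖ ^ 2 ∂γ) '' {γ | IsCoupling γ μ ν})

/-- 2-Wasserstein distance. -/
def dW {d : ℕ} (μ ν : Measure (Rd d)) : ℝ := Real.sqrt (dW2sq μ ν)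

/-- Absolutely continuous curve in `(P₂, d_W)` on `[0,T]`. -/
def ACcurve {d : ℕ} (T : ℝ) (ρ : ℝ → Measure (Rd d)) : Prop :=
  ∃ g : ℝ → ℝ, (∀ r, 0 ≤ g r) ∧ IntegrableOn g (Set.Icc 0 T) ∧
    ∀ s t : ℝ, 0 ≤ s → s ≤ t → t ≤ T → dW (ρ s) (ρ t) ≤ ∫ r in s..t, g r

/-- The regularised entropy `H_σ^ε`. -/
def Hsig {d : ℕ} (ε σ : ℝ) (V N : Rd d → ℝ) (μ : Measure (Rd d)) : ℝ :=
  ∫ x, ((1 - σ) * convM ε V μ x + σ * N x) *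
    Real.log ((1 - σ) * convM ε V μ x + σ * N x)

/-- Geodesic interpolant `ρ_α = ((1-α)π¹ + απ²)_# γ`. -/
def geod {d : ℕ} (γ : Measure (Rd d × Rd d)) (α : ℝ) : Measure (Rd d) :=
  γ.map fun q : Rd d × Rd d => (1 - α) • q.1 + α • q.2

/-- Fast diffusion kernel `V(x) = c ⟨x⟩^{-2α}`, normalised. -/
def Vfd (d : ℕ) (α : ℝ) : Rd d → ℝ := fun x =>
  (∫ y : Rd d, jbr y ^ (-(2 * α)))⁻¹ * jbr x ^ (-(2 * α))

/-- Laplacian `Δφ(x) = ∑ ∂²φ/∂x_i²`. -/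
def lapl {d : ℕ} (φ : Rd d → ℝ) (x : Rd d) : ℝ :=
  ∑ i : Fin d,
    fderiv ℝ (fun y => fderiv ℝ φ y (EuclideanSpace.single i 1)) x (EuclideanSpace.single i 1)

/-- Weighted convolution `((V_ε w) * ρ)(x) = ∫ V_ε(x-y) w(x-y) dρ(y)`. -/
def wconv {d : ℕ} (ε : ℝ) (V : Rd d → ℝ) (w : Rd d → ℝ) (ρ : Measure (Rd d)) (x : Rd d) : ℝ :=
  ∫ y, moll ε V (x - y) * w (x - y) ∂ρ

/-- Continuity in the narrow topology on `[0,T]`. -/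
def NarrowContinuousOn {d : ℕ} (T : ℝ) (ρ : ℝ → Measure (Rd d)) : Prop :=
  ∀ f : Rd d → ℝ, Continuous f → (∃ M, ∀ x, |f x| ≤ M) →
    ContinuousOn (fun t => ∫ x, f x ∂(ρ t)) (Set.Icc 0 T)

/-- Weak measure solution of the regularised nonlocal heat equation (NLHE_σ). -/
def IsWeakSolNLHEs {d : ℕ} (T ε σ : ℝ) (V N : Rd d → ℝ)
    (ρ₀ : Measure (Rd d)) (ρ : ℝ → Measure (Rd d)) : Prop :=
  ρ 0 = ρ₀ ∧
  (∀ t ∈ Set.Icc (0 : ℝ) T, IsProbabilityMeasure (ρ t) ∧ FinSecondMoment (ρ t)) ∧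
  ACcurve T ρ ∧
  ∀ φ : Rd d → ℝ, ContDiff ℝ 1 φ → HasCompactSupport φ → ∀ t ∈ Set.Icc (0 : ℝ) T,
    (∫ x, φ x ∂(ρ t)) - (∫ x, φ x ∂ρ₀)
      = -(1 - σ) * ∫ s in (0 : ℝ)..t,
          ∫ x, ⟪gradient φ x,
              convGradF ε V
                (fun y => Real.log ((1 - σ) * convM ε V (ρ s) y + σ * N y)) x⟫ ∂(ρ s)

/-- The a priori bounds provided by the JKO construction, with constant `C`. -/
def JKOBounds {d : ℕ} (T ε σ : ℝ) (V N : Rd d → ℝ) (C : ℝ) (ρ : ℝ → Measure (Rd d)) : Prop :=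
  (∀ t ∈ Set.Icc (0 : ℝ) T, (∫ x, ‖x‖ ^ 2 ∂(ρ t)) ≤ C) ∧
  (∀ s ∈ Set.Icc (0 : ℝ) T, ∀ t ∈ Set.Icc (0 : ℝ) T, dW2sq (ρ s) (ρ t) ≤ C * |t - s|) ∧
  (∫ t in Set.Ioc (0 : ℝ) T,
      ∫ x, ‖gradient (fun y => Real.sqrt ((1 - σ) * convM ε V (ρ t) y + σ * N y)) x‖ ^ 2) ≤ C

/-- Weak solution of the heat equation on `[0,T]` with initial datum `ρ₀`. -/
def IsWeakSolHeat {d : ℕ} (T : ℝ) (ρ₀ : Measure (Rd d)) (ρ : ℝ → Measure (Rd d)) : Prop :=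
  ρ 0 = ρ₀ ∧
  (∀ t ∈ Set.Icc (0 : ℝ) T, IsProbabilityMeasure (ρ t) ∧ FinSecondMoment (ρ t)) ∧
  ACcurve T ρ ∧
  ∃ u : ℝ → Rd d → ℝ,
    (∀ t ∈ Set.Icc (0 : ℝ) T, (∀ x, 0 ≤ u t x) ∧
      ρ t = volume.withDensity fun x => ENNReal.ofReal (u t x)) ∧
    Integrable (fun q : ℝ × Rd d => ‖gradient (fun y => Real.sqrt (u q.1 y)) q.2‖ ^ 2)
      ((volume.restrict (Set.Ioc (0 : ℝ) T)).prod volume) ∧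
    ∀ φ : Rd d → ℝ, ContDiff ℝ 1 φ → HasCompactSupport φ → ∀ t ∈ Set.Icc (0 : ℝ) T,
      (∫ x, φ x ∂(ρ t)) - (∫ x, φ x ∂ρ₀)
        = -∫ s in (0 : ℝ)..t, ∫ x, ⟪gradient φ x, gradient (u s) x⟫

/-- Weak solution of the fast diffusion equation `∂_t ρ = Δρ^m` on `[0,T]`. -/
def IsWeakSolFDE {d : ℕ} (T m : ℝ) (ρ₀ : Measure (Rd d)) (ρ : ℝ → Measure (Rd d)) : Prop :=
  ρ 0 = ρ₀ ∧
  (∀ t ∈ Set.Icc (0 : ℝ) T, IsProbabilityMeasure (ρ t) ∧ FinSecondMoment (ρ t)) ∧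
  ACcurve T ρ ∧
  ∃ u : ℝ → Rd d → ℝ,
    (∀ t ∈ Set.Icc (0 : ℝ) T, (∀ x, 0 ≤ u t x) ∧
      ρ t = volume.withDensity fun x => ENNReal.ofReal (u t x)) ∧
    ∀ φ : Rd d → ℝ, ContDiff ℝ 2 φ → HasCompactSupport φ → ∀ t ∈ Set.Icc (0 : ℝ) T,
      (∫ x, φ x ∂(ρ t)) - (∫ x, φ x ∂ρ₀)
        = ∫ s in (0 : ℝ)..t, ∫ x, lapl φ x * u s x ^ m

/-- The velocity field `ω = ∇V_ε * log(V_ε*ρ)`. -/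
def omegaGlob (d : ℕ) (ε : ℝ) (V : Rd d → ℝ) (ρ : Measure (Rd d)) (x : Rd d) : Rd d :=
  ∫ y, Real.log (convM ε V ρ y) • gradient (moll ε V) (x - y)

/-!
Put `ℓ = log (V_ε * ρ)` and `ω = ∇V_ε * ℓ`. The bound `‖∇V‖ ≤ K V` is inherited by `V_ε * ρ` with constant `K / ε`,
so `ℓ` is `K / ε`-Lipschitz, whatever `ρ` is. Since `V_ε` is even, `∇V_ε` has mean zero and
`ω(x) = ∫ (ℓ(x - z) - ℓ(x)) ∇V_ε(z) dz`, whose norm is at most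
`(K / ε) ∫ ‖z‖ ‖∇V_ε(z)‖ dz ≤ (K² / ε) ∫ ‖u‖ V(u) du`. In the same way `ω` is Lipschitz with
constant `(K / ε) ∫ ‖∇V_ε‖ ≤ K² / ε²`, which bounds its derivative. For `V = N₁` one can take
`K = 1` because `⟨·⟩` is `1`-Lipschitz.
-/

open Set

section LipschitzAgainstKernel

variable {E F : Type*} [NormedAddCommGroup E] [MeasurableSpace E] [OpensMeasurableSpace E]
  [NormedAddCommGroup F] [NormedSpace ℝ F] {μ : Measure E} {g : E → ℝ} {k : E → F} {L : ℝ}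

theorem integrable_comp_sub_smul (hg : ∀ u v, |g u - g v| ≤ L * ‖u - v‖)
    (hk : Integrable k μ) (hk₁ : Integrable (fun z => ‖z‖ * ‖k z‖) μ) (x : E) :
    Integrable (fun z => g (x - z) • k z) μ := by
  have hg_cont : Continuous g :=
    (LipschitzWith.of_dist_le' fun u v => by
      rw [Real.dist_eq, dist_eq_norm]; exact hg u v).continuous
  refine ((hk.norm.const_mul |g x|).add (hk₁.const_mul L)).mono'
    ((hg_cont.comp (continuous_const.sub continuous_id)).aestronglyMeasurable.smul hk.1)
    (ae_of_all _ fun z => ?_)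
  have hgz : |g (x - z)| ≤ |g x| + L * ‖z‖ := by
    have := hg (x - z) x
    rw [sub_sub_cancel_left, norm_neg] at this
    linarith [abs_sub_abs_le_abs_sub (g (x - z)) (g x)]
  rw [norm_smul, Real.norm_eq_abs]
  calc |g (x - z)| * ‖k z‖ ≤ (|g x| + L * ‖z‖) * ‖k z‖ :=
        mul_le_mul_of_nonneg_right hgz (norm_nonneg _)
    _ = |g x| * ‖k z‖ + L * (‖z‖ * ‖k z‖) := by ring

theorem norm_integral_comp_sub_smul_sub_le (hg : ∀ u v, |g u - g v| ≤ L * ‖u - v‖)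
    (hk : Integrable k μ) (hk₁ : Integrable (fun z => ‖z‖ * ‖k z‖) μ) (a b : E) :
    ‖∫ z, g (a - z) • k z ∂μ - ∫ z, g (b - z) • k z ∂μ‖ ≤ L * ‖a - b‖ * ∫ z, ‖k z‖ ∂μ := by
  rw [← integral_sub (integrable_comp_sub_smul hg hk hk₁ a) (integrable_comp_sub_smul hg hk hk₁ b),
    ← integral_const_mul]
  refine norm_integral_le_of_norm_le (hk.norm.const_mul _) (ae_of_all _ fun z => ?_)
  rw [← sub_smul, norm_smul, Real.norm_eq_abs]
  have := hg (a - z) (b - z)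
  rw [sub_sub_sub_cancel_right] at this
  exact mul_le_mul_of_nonneg_right this (norm_nonneg _)

theorem norm_integral_comp_sub_smul_le (hg : ∀ u v, |g u - g v| ≤ L * ‖u - v‖)
    (hk : Integrable k μ) (hk₁ : Integrable (fun z => ‖z‖ * ‖k z‖) μ)
    (hk₀ : ∫ z, k z ∂μ = 0) (x : E) :
    ‖∫ z, g (x - z) • k z ∂μ‖ ≤ L * ∫ z, ‖z‖ * ‖k z‖ ∂μ := by
  have hcentre : ∫ z, g (x - z) • k z ∂μ = ∫ z, (g (x - z) - g x) • k z ∂μ := by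
    have hconst : Integrable (fun z => g x • k z) μ := hk.smul (g x)
    simp_rw [sub_smul]
    rw [integral_sub (integrable_comp_sub_smul hg hk hk₁ x) hconst, integral_smul, hk₀, smul_zero,
      sub_zero]
  rw [hcentre, ← integral_const_mul]
  refine norm_integral_le_of_norm_le (hk₁.const_mul _) (ae_of_all _ fun z => ?_)
  rw [norm_smul, Real.norm_eq_abs, ← mul_assoc]
  have := hg (x - z) x
  rw [sub_sub_cancel_left, norm_neg] at this
  exact mul_le_mul_of_nonneg_right this (norm_nonneg _)

end LipschitzAgainstKernel

section EvenGradient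

variable {E : Type*} [NormedAddCommGroup E] [InnerProductSpace ℝ E] [CompleteSpace E]
  {f : E → ℝ}

theorem measurable_gradient [MeasurableSpace E] [BorelSpace E] (f : E → ℝ) :
    Measurable (gradient f) :=
  (InnerProductSpace.toDual ℝ E).symm.continuous.measurable.comp (measurable_fderiv ℝ f)

theorem gradient_neg_of_even (hf : ∀ x, f (-x) = f x) (x : E) :
    gradient f (-x) = -gradient f x := by
  have h := fderiv_comp_smul (f := f) (x := x) (-1 : ℝ)
  simp only [neg_smul, one_smul, hf] at h
  rw [gradient, gradient, ← map_neg, h, neg_neg]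

theorem integral_gradient_eq_zero_of_even [MeasurableSpace E] [BorelSpace E] (μ : Measure E)
    [μ.IsNegInvariant] (hf : ∀ x, f (-x) = f x) : ∫ x, gradient f x ∂μ = 0 := by
  have h := integral_neg_eq_self (gradient f) μ
  simp only [gradient_neg_of_even hf, integral_neg] at h
  have h2 : (2 : ℝ) • ∫ x, gradient f x ∂μ = 0 := by
    rw [two_smul]
    nth_rewrite 1 [← h]
    exact neg_add_cancel _
  exact (smul_eq_zero.1 h2).resolve_left two_ne_zero

end EvenGradient

section Mollifier

variable {d : ℕ} {V : Rd d → ℝ} {K ε : ℝ}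

theorem moll_pos (hε : 0 < ε) (hV : ∀ x, 0 < V x) (x : Rd d) : 0 < moll ε V x :=
  mul_pos (by positivity) (hV _)

theorem moll_neg (hV : ∀ x, V (-x) = V x) (x : Rd d) : moll ε V (-x) = moll ε V x := by
  rw [moll, moll, smul_neg, hV]

theorem continuous_moll (hV : Continuous V) : Continuous (moll ε V) :=
  continuous_const.mul (hV.comp (continuous_const_smul _))

theorem differentiable_moll (hV : Differentiable ℝ V) : Differentiable ℝ (moll ε V) := by
  unfold moll
  fun_prop

theorem integrable_moll (hε : 0 < ε) (hV : Integrable V) : Integrable (moll ε V) :=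
  (hV.comp_smul (inv_ne_zero hε.ne')).const_mul _

theorem integral_moll (hε : 0 < ε) : ∫ x, moll ε V x = ∫ x, V x := by
  simp only [moll]
  rw [integral_const_mul, Measure.integral_comp_inv_smul_of_nonneg volume V hε.le,
    finrank_euclideanSpace_fin, smul_eq_mul, ← mul_assoc, inv_mul_cancel₀ (by positivity),
    one_mul]

theorem norm_mul_moll (hε : 0 < ε) (x : Rd d) :
    ‖x‖ * moll ε V x = ε * moll ε (fun u => ‖u‖ * V u) x := by
  simp only [moll, norm_smul, Real.norm_eq_abs, abs_of_pos (inv_pos.2 hε)]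
  field_simp

theorem fderiv_moll (x : Rd d) :
    fderiv ℝ (moll ε V) x = ((ε ^ d)⁻¹ * ε⁻¹) • fderiv ℝ V (ε⁻¹ • x) := by
  have h : moll ε V = (ε ^ d)⁻¹ • fun y => V (ε⁻¹ • y) := rfl
  rw [h, fderiv_const_smul_field, Pi.smul_apply, fderiv_comp_smul, smul_smul]

theorem norm_fderiv_moll_le (hε : 0 < ε) (hDV : ∀ x, ‖fderiv ℝ V x‖ ≤ K * V x) (x : Rd d) :
    ‖fderiv ℝ (moll ε V) x‖ ≤ K / ε * moll ε V x := by
  rw [fderiv_moll, norm_smul, Real.norm_of_nonneg (by positivity)]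
  calc (ε ^ d)⁻¹ * ε⁻¹ * ‖fderiv ℝ V (ε⁻¹ • x)‖
      ≤ (ε ^ d)⁻¹ * ε⁻¹ * (K * V (ε⁻¹ • x)) := mul_le_mul_of_nonneg_left (hDV _) (by positivity)
    _ = K / ε * moll ε V x := by rw [moll]; ring

theorem norm_gradient_moll_le (hε : 0 < ε) (hDV : ∀ x, ‖fderiv ℝ V x‖ ≤ K * V x) (x : Rd d) :
    ‖gradient (moll ε V) x‖ ≤ K / ε * moll ε V x := by
  rw [gradient, LinearIsometryEquiv.norm_map]
  exact norm_fderiv_moll_le hε hDV x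

theorem norm_mul_norm_gradient_moll_le (hε : 0 < ε) (hDV : ∀ x, ‖fderiv ℝ V x‖ ≤ K * V x)
    (x : Rd d) : ‖x‖ * ‖gradient (moll ε V) x‖ ≤ K * moll ε (fun u => ‖u‖ * V u) x :=
  calc ‖x‖ * ‖gradient (moll ε V) x‖ ≤ ‖x‖ * (K / ε * moll ε V x) :=
        mul_le_mul_of_nonneg_left (norm_gradient_moll_le hε hDV x) (norm_nonneg x)
    _ = K / ε * (ε * moll ε (fun u => ‖u‖ * V u) x) := by rw [← norm_mul_moll hε]; ring
    _ = K * moll ε (fun u => ‖u‖ * V u) x := by field_simp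

theorem integrable_gradient_moll (hε : 0 < ε) (hDV : ∀ x, ‖fderiv ℝ V x‖ ≤ K * V x)
    (hV : Integrable V) : Integrable (gradient (moll ε V)) :=
  ((integrable_moll hε hV).const_mul (K / ε)).mono' (measurable_gradient _).aestronglyMeasurable
    (ae_of_all _ (norm_gradient_moll_le hε hDV))

theorem integrable_norm_mul_norm_gradient_moll (hε : 0 < ε)
    (hDV : ∀ x, ‖fderiv ℝ V x‖ ≤ K * V x) (hV₁ : Integrable fun u => ‖u‖ * V u) :
    Integrable fun x => ‖x‖ * ‖gradient (moll ε V) x‖ :=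
  ((integrable_moll hε hV₁).const_mul K).mono'
    (continuous_norm.aestronglyMeasurable.mul (measurable_gradient _).norm.aestronglyMeasurable)
    (ae_of_all _ fun x => by
      rw [Real.norm_of_nonneg (by positivity)]
      exact norm_mul_norm_gradient_moll_le hε hDV x)

theorem integral_norm_gradient_moll_le (hε : 0 < ε) (hDV : ∀ x, ‖fderiv ℝ V x‖ ≤ K * V x)
    (hV : Integrable V) : ∫ x, ‖gradient (moll ε V) x‖ ≤ K / ε * ∫ x, V x := by
  rw [← integral_moll (V := V) hε, ← integral_const_mul]
  exact integral_mono (integrable_gradient_moll hε hDV hV).norm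
    ((integrable_moll hε hV).const_mul _) (norm_gradient_moll_le hε hDV)

theorem integral_norm_mul_norm_gradient_moll_le (hε : 0 < ε)
    (hDV : ∀ x, ‖fderiv ℝ V x‖ ≤ K * V x) (hV₁ : Integrable fun u => ‖u‖ * V u) :
    ∫ x, ‖x‖ * ‖gradient (moll ε V) x‖ ≤ K * ∫ u, ‖u‖ * V u := by
  rw [← integral_moll (V := fun u => ‖u‖ * V u) hε, ← integral_const_mul]
  exact integral_mono (integrable_norm_mul_norm_gradient_moll hε hDV hV₁)
    ((integrable_moll hε hV₁).const_mul _) (norm_mul_norm_gradient_moll_le hε hDV)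

end Mollifier

section Convolution

variable {d : ℕ} {V : Rd d → ℝ} {K B ε : ℝ} {ρ : Measure (Rd d)} [IsFiniteMeasure ρ]

theorem integrable_moll_sub (hε : 0 < ε) (hVc : Continuous V) (hV : ∀ x, 0 < V x)
    (hVB : ∀ x, V x ≤ B) (x : Rd d) : Integrable (fun y => moll ε V (x - y)) ρ :=
  Integrable.of_bound
    ((continuous_moll hVc).comp (continuous_const.sub continuous_id)).aestronglyMeasurable
    ((ε ^ d)⁻¹ * B) (ae_of_all _ fun y => by
      rw [Real.norm_of_nonneg (moll_pos hε hV _).le]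
      exact mul_le_mul_of_nonneg_left (hVB _) (by positivity))

theorem convM_pos [NeZero ρ] (hε : 0 < ε) (hVc : Continuous V) (hV : ∀ x, 0 < V x)
    (hVB : ∀ x, V x ≤ B) (x : Rd d) : 0 < convM ε V ρ x := by
  rw [convM, integral_pos_iff_support_of_nonneg (fun y => (moll_pos hε hV _).le)
    (integrable_moll_sub hε hVc hV hVB x)]
  have hsupp : Function.support (fun y => moll ε V (x - y)) = univ :=
    Function.support_eq_univ fun y => (moll_pos hε hV _).ne'
  rw [hsupp]
  exact Measure.measure_univ_pos.2 (NeZero.ne ρ)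

theorem hasFDerivAt_convM (hε : 0 < ε) (hVd : Differentiable ℝ V) (hV : ∀ x, 0 < V x)
    (hVB : ∀ x, V x ≤ B) (hDV : ∀ x, ‖fderiv ℝ V x‖ ≤ K * V x) (x₀ : Rd d) :
    HasFDerivAt (convM ε V ρ) (∫ y, fderiv ℝ (moll ε V) (x₀ - y) ∂ρ) x₀ := by
  have hK : 0 ≤ K := nonneg_of_mul_nonneg_left ((norm_nonneg _).trans (hDV 0)) (hV 0)
  refine hasFDerivAt_integral_of_dominated_of_fderiv_le (F := fun x y => moll ε V (x - y))
    (F' := fun x y => fderiv ℝ (moll ε V) (x - y)) (bound := fun _ => K / ε * ((ε ^ d)⁻¹ * B))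
    univ_mem (Eventually.of_forall fun x => ?_) (integrable_moll_sub hε hVd.continuous hV hVB x₀)
    ((measurable_fderiv ℝ _).comp (measurable_const.sub measurable_id)).aestronglyMeasurable
    (ae_of_all _ fun y x _ => ?_) (integrable_const _) (ae_of_all _ fun y x _ => ?_)
  · exact ((continuous_moll hVd.continuous).comp
      (continuous_const.sub continuous_id)).aestronglyMeasurable
  · refine (norm_fderiv_moll_le hε hDV _).trans (mul_le_mul_of_nonneg_left ?_ (by positivity))
    exact mul_le_mul_of_nonneg_left (hVB _) (by positivity)
  · have h := (differentiable_moll (ε := ε) hVd (x - y)).hasFDerivAt.comp x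
      ((hasFDerivAt_id x).sub_const y)
    rwa [ContinuousLinearMap.comp_id] at h

theorem norm_fderiv_convM_le (hε : 0 < ε) (hVd : Differentiable ℝ V) (hV : ∀ x, 0 < V x)
    (hVB : ∀ x, V x ≤ B) (hDV : ∀ x, ‖fderiv ℝ V x‖ ≤ K * V x) (x : Rd d) :
    ‖fderiv ℝ (convM ε V ρ) x‖ ≤ K / ε * convM ε V ρ x := by
  rw [(hasFDerivAt_convM hε hVd hV hVB hDV x).fderiv, convM, ← integral_const_mul]
  exact norm_integral_le_of_norm_le ((integrable_moll_sub hε hVd.continuous hV hVB x).const_mul _)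
    (ae_of_all _ fun y => norm_fderiv_moll_le hε hDV (x - y))

theorem abs_log_convM_sub_le [NeZero ρ] (hε : 0 < ε) (hVd : Differentiable ℝ V)
    (hV : ∀ x, 0 < V x) (hVB : ∀ x, V x ≤ B) (hDV : ∀ x, ‖fderiv ℝ V x‖ ≤ K * V x) (u v : Rd d) :
    |Real.log (convM ε V ρ u) - Real.log (convM ε V ρ v)| ≤ K / ε * ‖u - v‖ := by
  have hpos := convM_pos (ρ := ρ) hε hVd.continuous hV hVB
  have hlog : ∀ x, HasFDerivAt (fun y => Real.log (convM ε V ρ y))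
      ((convM ε V ρ x)⁻¹ • fderiv ℝ (convM ε V ρ) x) x := fun x =>
    (hasFDerivAt_convM hε hVd hV hVB hDV x).differentiableAt.hasFDerivAt.log (hpos x).ne'
  have hbound : ∀ x ∈ univ, ‖fderiv ℝ (fun y => Real.log (convM ε V ρ y)) x‖ ≤ K / ε :=
    fun x _ => by
      rw [(hlog x).fderiv, norm_smul, norm_inv, Real.norm_of_nonneg (hpos x).le]
      calc (convM ε V ρ x)⁻¹ * ‖fderiv ℝ (convM ε V ρ) x‖
          ≤ (convM ε V ρ x)⁻¹ * (K / ε * convM ε V ρ x) :=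
            mul_le_mul_of_nonneg_left (norm_fderiv_convM_le hε hVd hV hVB hDV x)
              (inv_nonneg.2 (hpos x).le)
        _ = K / ε := by field_simp [(hpos x).ne']
  simpa only [Real.norm_eq_abs] using convex_univ.norm_image_sub_le_of_norm_fderiv_le
    (fun x _ => (hlog x).differentiableAt) hbound (mem_univ v) (mem_univ u)

end Convolution

section VelocityField

variable {d : ℕ} {V : Rd d → ℝ} {K B ε : ℝ} {ρ : Measure (Rd d)}

theorem omegaGlob_eq_integral_comp_sub (x : Rd d) :
    omegaGlob d ε V ρ x = ∫ z, Real.log (convM ε V ρ (x - z)) • gradient (moll ε V) z := by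
  rw [omegaGlob, ← integral_sub_left_eq_self _ volume x]
  simp_rw [sub_sub_cancel]

theorem norm_omegaGlob_le [IsFiniteMeasure ρ] [NeZero ρ] (hε : 0 < ε) (hVd : Differentiable ℝ V)
    (hV : ∀ x, 0 < V x) (hVB : ∀ x, V x ≤ B) (hDV : ∀ x, ‖fderiv ℝ V x‖ ≤ K * V x)
    (hVeven : ∀ x, V (-x) = V x) (hVi : Integrable V) (hV₁ : Integrable fun u => ‖u‖ * V u)
    (x : Rd d) :
    ‖omegaGlob d ε V ρ x‖ ≤ K / ε * (K * ∫ u, ‖u‖ * V u) := by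
  have hK : 0 ≤ K := nonneg_of_mul_nonneg_left ((norm_nonneg _).trans (hDV 0)) (hV 0)
  rw [omegaGlob_eq_integral_comp_sub]
  calc _ ≤ K / ε * ∫ z, ‖z‖ * ‖gradient (moll ε V) z‖ :=
        norm_integral_comp_sub_smul_le (abs_log_convM_sub_le hε hVd hV hVB hDV)
          (integrable_gradient_moll hε hDV hVi) (integrable_norm_mul_norm_gradient_moll hε hDV hV₁)
          (integral_gradient_eq_zero_of_even volume (moll_neg hVeven)) x
    _ ≤ K / ε * (K * ∫ u, ‖u‖ * V u) :=
        mul_le_mul_of_nonneg_left (integral_norm_mul_norm_gradient_moll_le hε hDV hV₁)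
          (by positivity)

theorem norm_fderiv_omegaGlob_le [IsFiniteMeasure ρ] [NeZero ρ] (hε : 0 < ε)
    (hVd : Differentiable ℝ V) (hV : ∀ x, 0 < V x) (hVB : ∀ x, V x ≤ B)
    (hDV : ∀ x, ‖fderiv ℝ V x‖ ≤ K * V x) (hVi : Integrable V)
    (hV₁ : Integrable fun u => ‖u‖ * V u) (x : Rd d) :
    ‖fderiv ℝ (omegaGlob d ε V ρ) x‖ ≤ K / ε * (K / ε * ∫ u, V u) := by
  have hK : 0 ≤ K := nonneg_of_mul_nonneg_left ((norm_nonneg _).trans (hDV 0)) (hV 0)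
  have hmass : 0 ≤ ∫ u, V u := integral_nonneg fun u => (hV u).le
  refine norm_fderiv_le_of_lip' ℝ (by positivity) (Eventually.of_forall fun y => ?_)
  rw [omegaGlob_eq_integral_comp_sub, omegaGlob_eq_integral_comp_sub]
  calc _ ≤ K / ε * ‖y - x‖ * ∫ z, ‖gradient (moll ε V) z‖ :=
        norm_integral_comp_sub_smul_sub_le (abs_log_convM_sub_le hε hVd hV hVB hDV)
          (integrable_gradient_moll hε hDV hVi) (integrable_norm_mul_norm_gradient_moll hε hDV hV₁)
          y x
    _ ≤ K / ε * ‖y - x‖ * (K / ε * ∫ u, V u) :=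
        mul_le_mul_of_nonneg_left (integral_norm_gradient_moll_le hε hDV hVi) (by positivity)
    _ = K / ε * (K / ε * ∫ u, V u) * ‖y - x‖ := by ring

end VelocityField

section JapaneseBracketKernel

variable {d : ℕ}

theorem norm_le_jbr (x : Rd d) : ‖x‖ ≤ jbr x :=
  Real.le_sqrt_of_sq_le (by linarith)

theorem jbr_neg (x : Rd d) : jbr (-x) = jbr x := by
  rw [jbr, jbr, norm_neg]

theorem continuous_jbr : Continuous (jbr (d := d)) :=
  (continuous_const.add (continuous_norm.pow 2)).sqrt

theorem differentiable_jbr : Differentiable ℝ (jbr (d := d)) :=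
  ((differentiable_const _).add ((contDiff_norm_sq ℝ).differentiable one_ne_zero)).sqrt
    fun x => (by positivity : (0 : ℝ) < 1 + ‖x‖ ^ 2).ne'

theorem jbr_le_jbr_add_norm_sub (x y : Rd d) : jbr x ≤ jbr y + ‖x - y‖ := by
  have hy : jbr y ^ 2 = 1 + ‖y‖ ^ 2 := Real.sq_sqrt (by positivity)
  have hxy := norm_le_norm_add_norm_sub' x y
  rw [show jbr x = √(1 + ‖x‖ ^ 2) from rfl,
    Real.sqrt_le_left (add_nonneg ((norm_nonneg y).trans (norm_le_jbr y)) (norm_nonneg _))]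
  nlinarith [norm_le_jbr y, norm_nonneg x, norm_nonneg (x - y)]

theorem abs_jbr_sub_jbr_le (x y : Rd d) : |jbr x - jbr y| ≤ ‖x - y‖ := by
  rw [abs_sub_le_iff]
  constructor <;> linarith [jbr_le_jbr_add_norm_sub x y, jbr_le_jbr_add_norm_sub y x,
    norm_sub_rev x y]

theorem norm_fderiv_jbr_le (x : Rd d) : ‖fderiv ℝ jbr x‖ ≤ 1 :=
  norm_fderiv_le_of_lip' ℝ zero_le_one (Eventually.of_forall fun y => by
    simpa only [one_mul, Real.norm_eq_abs] using abs_jbr_sub_jbr_le y x)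

theorem pow_mul_exp_neg_le_factorial {t : ℝ} (ht : 0 ≤ t) (n : ℕ) :
    t ^ n * Real.exp (-t) ≤ n.factorial := by
  have h := Real.pow_div_factorial_le_exp t ht n
  rw [div_le_iff₀ (by positivity)] at h
  rw [Real.exp_neg, ← div_eq_mul_inv, div_le_iff₀ (Real.exp_pos t)]
  linarith

theorem integrable_norm_pow_mul_exp_neg_jbr (k : ℕ) :
    Integrable fun x : Rd d => ‖x‖ ^ k * Real.exp (-jbr x) := by
  have hdecay : ∀ (n : ℕ) (x : Rd d), ‖x‖ ^ n * Real.exp (-jbr x) ≤ n.factorial := fun n x =>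
    calc ‖x‖ ^ n * Real.exp (-jbr x) ≤ ‖x‖ ^ n * Real.exp (-‖x‖) :=
          mul_le_mul_of_nonneg_left (Real.exp_le_exp.2 (neg_le_neg (norm_le_jbr x)))
            (by positivity)
      _ ≤ n.factorial := pow_mul_exp_neg_le_factorial (norm_nonneg x) n
  have h := integrable_of_le_of_pow_mul_le (μ := volume) (k := k) (C₁ := 1)
    (f := fun x : Rd d => Real.exp (-jbr x))
    (fun x => by simpa only [Real.norm_of_nonneg (Real.exp_pos _).le, pow_zero, one_mul,
      Nat.factorial_zero, Nat.cast_one] using hdecay 0 x)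
    (fun x => by rw [Real.norm_of_nonneg (Real.exp_pos _).le]; exact hdecay _ x)
    (Real.continuous_exp.comp continuous_jbr.neg).aestronglyMeasurable
  simpa only [Real.norm_of_nonneg (Real.exp_pos _).le] using h

theorem integrable_exp_neg_jbr : Integrable fun x : Rd d => Real.exp (-jbr x) := by
  simpa only [pow_zero, one_mul] using integrable_norm_pow_mul_exp_neg_jbr (d := d) 0

theorem integral_exp_neg_jbr_pos : 0 < ∫ x : Rd d, Real.exp (-jbr x) :=
  integral_exp_pos integrable_exp_neg_jbr

theorem Nker_one_eq :
    Nker d 1 = fun x => (∫ y : Rd d, Real.exp (-jbr y))⁻¹ * Real.exp (-jbr x) := by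
  funext x
  simp only [Nker, pow_one]

theorem Nker_one_pos (x : Rd d) : 0 < Nker d 1 x := by
  rw [Nker_one_eq]
  exact mul_pos (inv_pos.2 integral_exp_neg_jbr_pos) (Real.exp_pos _)

theorem Nker_one_le (x : Rd d) : Nker d 1 x ≤ (∫ y : Rd d, Real.exp (-jbr y))⁻¹ := by
  rw [Nker_one_eq]
  refine mul_le_of_le_one_right (inv_pos.2 integral_exp_neg_jbr_pos).le ?_
  rw [Real.exp_le_one_iff, neg_nonpos]
  exact (norm_nonneg x).trans (norm_le_jbr x)

theorem Nker_one_neg (x : Rd d) : Nker d 1 (-x) = Nker d 1 x := by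
  simp only [Nker_one_eq, jbr_neg]

theorem integrable_Nker_one : Integrable (Nker d 1) := by
  rw [Nker_one_eq]
  exact integrable_exp_neg_jbr.const_mul _

theorem integral_Nker_one : ∫ x, Nker d 1 x = 1 := by
  rw [Nker_one_eq, integral_const_mul, inv_mul_cancel₀ integral_exp_neg_jbr_pos.ne']

theorem integrable_norm_mul_Nker_one : Integrable fun x : Rd d => ‖x‖ * Nker d 1 x := by
  simp only [Nker_one_eq, mul_left_comm ‖_‖]
  simpa only [pow_one] using (integrable_norm_pow_mul_exp_neg_jbr (d := d) 1).const_mul _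

theorem differentiable_Nker_one : Differentiable ℝ (Nker d 1) := by
  rw [Nker_one_eq]
  exact (differentiable_jbr.neg.exp).const_mul _

theorem norm_fderiv_Nker_one_le (x : Rd d) : ‖fderiv ℝ (Nker d 1) x‖ ≤ Nker d 1 x := by
  have h : HasFDerivAt (Nker d 1) ((∫ y : Rd d, Real.exp (-jbr y))⁻¹ •
      Real.exp (-jbr x) • -fderiv ℝ jbr x) x := by
    rw [Nker_one_eq]
    exact ((differentiable_jbr x).hasFDerivAt.neg.exp).const_mul _
  rw [h.fderiv, norm_smul, norm_smul, norm_neg,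
    Real.norm_of_nonneg (inv_pos.2 integral_exp_neg_jbr_pos).le,
    Real.norm_of_nonneg (Real.exp_pos _).le, ← mul_assoc]
  calc _ ≤ (∫ y : Rd d, Real.exp (-jbr y))⁻¹ * Real.exp (-jbr x) * 1 :=
        mul_le_mul_of_nonneg_left (norm_fderiv_jbr_le x) (by positivity)
    _ = Nker d 1 x := by rw [mul_one, Nker_one_eq]

end JapaneseBracketKernel

/-- for the globally supported kernel `V₁ = N₁`, the convolution
`V_ε*ρ` is everywhere positive and the velocity field `∇V_ε*log(V_ε*ρ)` is
bounded by `C/ε`, its Jacobian by `C/ε²`, with `C = C(V₁)`. -/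
theorem velocity_bound_global_kernel (d : ℕ) :
    (∀ ε : ℝ, 0 < ε → ∀ ρ : Measure (Rd d), IsProbabilityMeasure ρ →
      ∀ x, 0 < convM ε (Nker d 1) ρ x)
    ∧ ∃ C > 0, ∀ ε : ℝ, 0 < ε →
        ∀ ρ : Measure (Rd d), IsProbabilityMeasure ρ → FinSecondMoment ρ →
          (∀ x, ‖omegaGlob d ε (Nker d 1) ρ x‖ ≤ C / ε) ∧
          (∀ x, ‖fderiv ℝ (omegaGlob d ε (Nker d 1) ρ) x‖ ≤ C / ε ^ 2) := by
  have hDV : ∀ x : Rd d, ‖fderiv ℝ (Nker d 1) x‖ ≤ 1 * Nker d 1 x := fun x =>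
    (norm_fderiv_Nker_one_le x).trans_eq (one_mul _).symm
  set M := ∫ u : Rd d, ‖u‖ * Nker d 1 u
  have hM : 0 ≤ M := integral_nonneg fun u => mul_nonneg (norm_nonneg u) (Nker_one_pos u).le
  refine ⟨fun ε hε ρ _ x =>
    convM_pos hε differentiable_Nker_one.continuous Nker_one_pos Nker_one_le x,
    M + 1, by positivity, fun ε hε ρ _ _ => ⟨fun x => ?_, fun x => ?_⟩⟩
  · calc ‖omegaGlob d ε (Nker d 1) ρ x‖ ≤ 1 / ε * (1 * M) :=
          norm_omegaGlob_le hε differentiable_Nker_one Nker_one_pos Nker_one_le hDV Nker_one_neg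
            integrable_Nker_one integrable_norm_mul_Nker_one x
      _ ≤ (M + 1) / ε := by
          rw [one_mul, one_div_mul_eq_div]
          gcongr
          linarith
  · calc ‖fderiv ℝ (omegaGlob d ε (Nker d 1) ρ) x‖ ≤ 1 / ε * (1 / ε * ∫ u, Nker d 1 u) :=
          norm_fderiv_omegaGlob_le hε differentiable_Nker_one Nker_one_pos Nker_one_le hDV
            integrable_Nker_one integrable_norm_mul_Nker_one x
      _ = 1 / ε ^ 2 := by rw [integral_Nker_one]; ring
      _ ≤ (M + 1) / ε ^ 2 := by gcongr; linarith
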